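/- arXiv:0804.2441 — 2 statements merged into one kernel-verified Lean document; each statement's English description precedes it below -/
import Mathlib

section
/- In the frequency-domain model of an LCMT, let i, j, k be nodes such that k is a descendant of j, i is not a descendant of j, and i ≠ j. Then C(X i ω, X k ω) ≤ C(X i ω, X j ω) for every ω ∈ ℝ. If, in addition, h m ω ≠ 0 for every node m ≠ r and every ω, then the inequality is strict for every ω; consequently, if the coherence functions ω ↦ C(X i ω, X j ω) and ω ↦ C(X i ω, X k ω) are measurable, d(i, j) < d(i, k). -/
open scoped InnerProductSpace

/-- The coherence of two vectors of a complex inner product space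
(inner product conjugate-linear in the first argument):
`C(u, v) = ‖⟪u, v⟫‖² / (‖u‖² · ‖v‖²)`. -/
noncomputable def coherence {H : Type*} [NormedAddCommGroup H]
    [InnerProductSpace ℂ H] (u v : H) : ℝ :=
  ‖⟪u, v⟫_ℂ‖ ^ 2 / (‖u‖ ^ 2 * ‖v‖ ^ 2)

/-- The coherence-based distance between two frequency-indexed families of
vectors: `d(f, g) = ( (1/(2π)) ∫_{-π}^{π} (1 − C(f ω, g ω)) dω )^{1/2}`. -/
noncomputable def cohDist {H : Type*} [NormedAddCommGroup H]
    [InnerProductSpace ℂ H] (f g : ℝ → H) : ℝ :=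
  Real.sqrt ((1 / (2 * Real.pi)) *
    ∫ ω in (-Real.pi)..Real.pi, (1 - coherence (f ω) (g ω)))

/-!
Going up the path from `k` to `j` gives `X k = g • X j + w`, where `w` is a combination of the
noises of the nodes on that path. None of these nodes is an ancestor of `i` or of `j`, so `w` is
orthogonal to `X i` and `X j`: the inner product with `X i` scales by `g`, while
`‖X k‖² = ‖g‖² ‖X j‖² + ‖w‖²`, and the coherence can only drop. It drops strictly when `w ≠ 0`
(its inner product with `ρ k` is `‖ρ k‖²`) and `⟪X i, X j⟫ ≠ 0`. For the latter, expand `X i` and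
`X j` down to their nearest common ancestor `a`: all noise terms are mutually orthogonal and
orthogonal to `X a`, leaving a product of transfer functions times `‖X a‖²`. Integrating the
strict pointwise inequality gives `d(i, j) < d(i, k)`.
-/

section Coherence

variable {H : Type*} [NormedAddCommGroup H] [InnerProductSpace ℂ H]

lemma inner_smul_add_smul_add {x w w' : H} (c c' : ℂ) (hw : ⟪w, x⟫_ℂ = 0)
    (hw' : ⟪x, w'⟫_ℂ = 0) (hww' : ⟪w, w'⟫_ℂ = 0) :
    ⟪c • x + w, c' • x + w'⟫_ℂ = (starRingEnd ℂ) c * c' * ⟪x, x⟫_ℂ := by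
  simp only [inner_add_left, inner_add_right, inner_smul_left, inner_smul_right, hw, hw', hww']
  ring

lemma coherence_nonneg (u v : H) : 0 ≤ coherence u v := by
  unfold coherence; positivity

lemma coherence_le_one (u v : H) : coherence u v ≤ 1 := by
  unfold coherence
  refine div_le_one_of_le₀ ?_ (by positivity)
  rw [← mul_pow]
  exact pow_le_pow_left₀ (norm_nonneg _) (norm_inner_le_norm u v) 2

lemma coherence_smul_add_eq {u v w : H} (huw : ⟪u, w⟫_ℂ = 0) (hvw : ⟪v, w⟫_ℂ = 0) (c : ℂ) :
    coherence u (c • v + w) =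
      ‖c‖ ^ 2 * ‖⟪u, v⟫_ℂ‖ ^ 2 / (‖u‖ ^ 2 * (‖c‖ ^ 2 * ‖v‖ ^ 2 + ‖w‖ ^ 2)) := by
  have hcvw : ⟪c • v, w⟫_ℂ = 0 := by rw [inner_smul_left, hvw, mul_zero]
  rw [coherence, inner_add_right, inner_smul_right, huw, add_zero, norm_mul, mul_pow, sq ‖_ + w‖,
    norm_add_sq_eq_norm_sq_add_norm_sq_of_inner_eq_zero _ _ hcvw, norm_smul]
  ring

lemma coherence_smul_add_le {u v w : H} (huw : ⟪u, w⟫_ℂ = 0) (hvw : ⟪v, w⟫_ℂ = 0) (c : ℂ) :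
    coherence u (c • v + w) ≤ coherence u v := by
  rw [coherence_smul_add_eq huw hvw]
  by_cases huv : ⟪u, v⟫_ℂ = 0
  · simp [huv, coherence_nonneg]
  have hu : 0 < ‖u‖ := norm_pos_iff.2 fun hu ↦ huv (by simp [hu])
  have hv : 0 < ‖v‖ := norm_pos_iff.2 fun hv ↦ huv (by simp [hv])
  rcases (by positivity : 0 ≤ ‖c‖ ^ 2 * ‖v‖ ^ 2 + ‖w‖ ^ 2).eq_or_lt with hden | hden
  · simp [← hden, coherence_nonneg]
  rw [coherence, div_le_div_iff₀ (by positivity) (by positivity)]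
  have : 0 ≤ ‖⟪u, v⟫_ℂ‖ ^ 2 * ‖u‖ ^ 2 * ‖w‖ ^ 2 := by positivity
  nlinarith

lemma coherence_smul_add_lt {u v w : H} (huw : ⟪u, w⟫_ℂ = 0) (hvw : ⟪v, w⟫_ℂ = 0)
    (huv : ⟪u, v⟫_ℂ ≠ 0) (hw : w ≠ 0) (c : ℂ) :
    coherence u (c • v + w) < coherence u v := by
  have hu : 0 < ‖u‖ := norm_pos_iff.2 fun hu ↦ huv (by simp [hu])
  have hv : 0 < ‖v‖ := norm_pos_iff.2 fun hv ↦ huv (by simp [hv])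
  have hw : 0 < ‖w‖ := norm_pos_iff.2 hw
  rw [coherence_smul_add_eq huw hvw, coherence, div_lt_div_iff₀ (by positivity) (by positivity)]
  have : 0 < ‖⟪u, v⟫_ℂ‖ ^ 2 * ‖u‖ ^ 2 * ‖w‖ ^ 2 := by
    have := norm_pos_iff.2 huv
    positivity
  nlinarith

lemma intervalIntegrable_one_sub_coherence {f g : ℝ → H}
    (hm : Measurable fun ω ↦ coherence (f ω) (g ω)) (a b : ℝ) :
    IntervalIntegrable (fun ω ↦ 1 - coherence (f ω) (g ω)) MeasureTheory.volume a b := by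
  refine (intervalIntegrable_const (c := (1 : ℝ))).mono_fun'
    (measurable_const.sub hm).aestronglyMeasurable (Filter.Eventually.of_forall fun ω ↦ ?_)
  dsimp only
  rw [Real.norm_eq_abs, abs_le]
  constructor <;> linarith [coherence_nonneg (f ω) (g ω), coherence_le_one (f ω) (g ω)]

lemma cohDist_lt_cohDist {f g g' : ℝ → H}
    (hm : Measurable fun ω ↦ coherence (f ω) (g ω))
    (hm' : Measurable fun ω ↦ coherence (f ω) (g' ω))
    (hlt : ∀ ω, coherence (f ω) (g' ω) < coherence (f ω) (g ω)) :
    cohDist f g < cohDist f g' := by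
  have hπ : -Real.pi < Real.pi := by linarith [Real.pi_pos]
  have hint := intervalIntegrable_one_sub_coherence hm (-Real.pi) Real.pi
  have hint' := intervalIntegrable_one_sub_coherence hm' (-Real.pi) Real.pi
  have hdiff : 0 < (∫ ω in (-Real.pi)..Real.pi, (1 - coherence (f ω) (g' ω))) -
      ∫ ω in (-Real.pi)..Real.pi, (1 - coherence (f ω) (g ω)) := by
    rw [← intervalIntegral.integral_sub hint' hint]
    exact intervalIntegral.intervalIntegral_pos_of_pos_on (hint'.sub hint)
      (fun ω _ ↦ by linarith [hlt ω]) hπ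
  refine Real.sqrt_lt_sqrt (mul_nonneg (by positivity) ?_)
    (mul_lt_mul_of_pos_left (by linarith) (by positivity))
  exact intervalIntegral.integral_nonneg hπ.le fun ω _ ↦ by linarith [coherence_le_one (f ω) (g ω)]

end Coherence

lemma Function.iterate_add_sub_eq_of_iterate_eq {α : Type*} {f : α → α} {x y : α} {s t n : ℕ}
    (h : f^[s] x = f^[t] y) (htn : t ≤ n) : f^[s + (n - t)] x = f^[n] y := by
  rw [add_comm, Function.iterate_add_apply, h, ← Function.iterate_add_apply, Nat.sub_add_cancel htn]

structure IsRootedTree {V : Type*} (r : V) (par : V → V) : Prop where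
  par_root : par r = r
  exists_iterate_eq_root : ∀ j, ∃ n, par^[n] j = r

namespace IsRootedTree

variable {V : Type*} {r : V} {par : V → V} (T : IsRootedTree r par)
include T

lemma iterate_root (n : ℕ) : par^[n] r = r := Function.iterate_fixed T.par_root n

lemma iterate_eq_root_of_le {x : V} {t n : ℕ} (h : par^[t] x = r) (htn : t ≤ n) :
    par^[n] x = r := by
  rw [← Nat.sub_add_cancel htn, Function.iterate_add_apply, h, T.iterate_root]

lemma eq_root_of_iterate_eq_self {x : V} {n : ℕ} (hn : n ≠ 0) (hx : par^[n] x = x) : x = r := by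
  obtain ⟨N, hN⟩ := T.exists_iterate_eq_root x
  calc x = par^[n * N] x := (Function.IsPeriodicPt.mul_const hx N).eq.symm
    _ = r := T.iterate_eq_root_of_le hN (Nat.le_mul_of_pos_left N (Nat.pos_of_ne_zero hn))

lemma exists_iterate_eq_root_forall_lt_ne (m : V) :
    ∃ n, par^[n] m = r ∧ ∀ t < n, par^[t] m ≠ r := by
  classical
  exact ⟨_, Nat.find_spec (T.exists_iterate_eq_root m), fun _ ↦ Nat.find_min _⟩

/-- `par^[t₀] i = par^[s₀] j` is the nearest common ancestor of `i` and `j`. -/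
lemma exists_meet (i j : V) :
    ∃ t₀ s₀, par^[t₀] i = par^[s₀] j ∧ (∀ t < t₀, ∀ s, par^[t] i ≠ par^[s] j) ∧
      ∀ s < s₀, ∀ t, par^[t] i ≠ par^[s] j := by
  classical
  have hex : ∃ t s, par^[t] i = par^[s] j := by
    obtain ⟨N, hN⟩ := T.exists_iterate_eq_root i
    obtain ⟨M, hM⟩ := T.exists_iterate_eq_root j
    exact ⟨N, M, hN.trans hM.symm⟩
  have hs : ∃ s, par^[Nat.find hex] i = par^[s] j := Nat.find_spec hex
  have hmeet : par^[Nat.find hex] i = par^[Nat.find hs] j := Nat.find_spec hs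
  refine ⟨_, _, hmeet, fun t ht s e ↦ Nat.find_min hex ht ⟨s, e⟩, fun s hs₀ t e ↦ ?_⟩
  rcases lt_or_ge t (Nat.find hex) with ht | ht
  · exact Nat.find_min hex ht ⟨s, e⟩
  -- Otherwise `par^[s] j` lies on a cycle, hence is the root, and then so is the meet.
  have hcyc := (Function.iterate_add_sub_eq_of_iterate_eq hmeet.symm ht).trans e
  have hr : par^[s] j = r :=
    T.eq_root_of_iterate_eq_self (n := Nat.find hs + (t - Nat.find hex) - s) (by omega) <| by
      rwa [← Function.iterate_add_apply, Nat.sub_add_cancel (by omega)]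
  exact Nat.find_min hs hs₀ (hmeet.trans ((T.iterate_eq_root_of_le hr hs₀.le).trans hr.symm))

end IsRootedTree

section TreeSignal

variable {H : Type*} [NormedAddCommGroup H] [InnerProductSpace ℂ H] {V : Type*}

def pathGain (par : V → V) (h : V → ℂ) (m : V) (n : ℕ) : ℂ :=
  ∏ t ∈ Finset.range n, h (par^[t] m)

def pathNoise (par : V → V) (h : V → ℂ) (ρ : V → H) (m : V) (n : ℕ) : H :=
  ∑ t ∈ Finset.range n, pathGain par h m t • ρ (par^[t] m)

variable {r : V} {par : V → V} {h : V → ℂ} {ρ : V → H} {X : V → H}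

lemma pathGain_ne_zero {m : V} {n : ℕ} (hh : ∀ t < n, h (par^[t] m) ≠ 0) :
    pathGain par h m n ≠ 0 :=
  Finset.prod_ne_zero_iff.2 fun t ht ↦ hh t (Finset.mem_range.1 ht)

lemma inner_pathNoise_left_eq_zero {m : V} {n : ℕ} {u : H}
    (hu : ∀ t < n, ⟪ρ (par^[t] m), u⟫_ℂ = 0) : ⟪pathNoise par h ρ m n, u⟫_ℂ = 0 := by
  rw [pathNoise, sum_inner]
  exact Finset.sum_eq_zero fun t ht ↦ by rw [inner_smul_left, hu t (Finset.mem_range.1 ht), mul_zero]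

/-- The signals of an LCMT at a single frequency. -/
structure IsTreeSignal (r : V) (par : V → V) (h : V → ℂ) (ρ : V → H) (X : V → H) : Prop where
  root : X r = ρ r
  eq_smul_add : ∀ j, j ≠ r → X j = h j • X (par j) + ρ j

namespace IsTreeSignal

variable (S : IsTreeSignal r par h ρ X)
include S

lemma eq_pathGain_smul_add_pathNoise {m : V} {n : ℕ} (hn : ∀ t < n, par^[t] m ≠ r) :
    X m = pathGain par h m n • X (par^[n] m) + pathNoise par h ρ m n := by
  induction n with
  | zero => simp [pathGain, pathNoise]
  | succ n ih =>
    rw [ih fun t ht ↦ hn t (by omega), S.eq_smul_add _ (hn n n.lt_succ_self)]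
    simp only [pathGain, pathNoise, Finset.prod_range_succ, Finset.sum_range_succ,
      Function.iterate_succ_apply']
    module

lemma eq_pathNoise {m : V} {n : ℕ} (hn : par^[n] m = r) (hne : ∀ t < n, par^[t] m ≠ r) :
    X m = pathNoise par h ρ m (n + 1) := by
  rw [S.eq_pathGain_smul_add_pathNoise hne, hn, S.root, pathNoise, pathNoise,
    Finset.sum_range_succ, hn, add_comm]

variable (T : IsRootedTree r par) (hρ : Pairwise fun a b ↦ ⟪ρ a, ρ b⟫_ℂ = 0)
include T hρ

lemma inner_noise_eq_zero {a m : V} (ha : ∀ t, par^[t] m ≠ a) : ⟪ρ a, X m⟫_ℂ = 0 := by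
  obtain ⟨n, hn, hne⟩ := T.exists_iterate_eq_root_forall_lt_ne m
  rw [S.eq_pathNoise hn hne, inner_eq_zero_symm]
  exact inner_pathNoise_left_eq_zero fun t _ ↦ hρ (ha t)

lemma inner_noise_self (m : V) : ⟪ρ m, X m⟫_ℂ = ⟪ρ m, ρ m⟫_ℂ := by
  by_cases hm : m = r
  · rw [hm, S.root]
  have hpar : ⟪ρ m, X (par m)⟫_ℂ = 0 := S.inner_noise_eq_zero T hρ fun t e ↦
    hm (T.eq_root_of_iterate_eq_self t.succ_ne_zero (by rwa [Function.iterate_succ_apply]))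
  rw [S.eq_smul_add m hm, inner_add_right, inner_smul_right, hpar, mul_zero, zero_add]

lemma ne_zero {m : V} (hm : ρ m ≠ 0) : X m ≠ 0 := fun h0 ↦
  hm (inner_self_eq_zero.1 (by rw [← S.inner_noise_self T hρ, h0, inner_zero_right]))

lemma exists_eq_smul_add_orthogonal {i j k : V} {n : ℕ} (hn : n ≠ 0) (hk : par^[n] k = j)
    (hi : ∀ t, par^[t] i ≠ j) :
    ∃ (c : ℂ) (w : H), X k = c • X j + w ∧ ⟪X i, w⟫_ℂ = 0 ∧ ⟪X j, w⟫_ℂ = 0 ∧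
      ⟪ρ k, w⟫_ℂ = ⟪ρ k, ρ k⟫_ℂ := by
  have hj : j ≠ r := fun e ↦ by
    obtain ⟨N, hN⟩ := T.exists_iterate_eq_root i
    exact hi N (hN.trans e.symm)
  have hpath : ∀ t < n, par^[t] k ≠ r := fun t ht e ↦
    hj (hk ▸ T.iterate_eq_root_of_le e ht.le)
  have hpath_i : ∀ t < n, ⟪ρ (par^[t] k), X i⟫_ℂ = 0 := fun t ht ↦
    S.inner_noise_eq_zero T hρ fun s e ↦
      hi _ ((Function.iterate_add_sub_eq_of_iterate_eq e ht.le).trans hk)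
  have hpath_j : ∀ t < n, ⟪ρ (par^[t] k), X j⟫_ℂ = 0 := fun t ht ↦
    S.inner_noise_eq_zero T hρ fun s e ↦ hj <| T.eq_root_of_iterate_eq_self (by omega)
      ((Function.iterate_add_sub_eq_of_iterate_eq e ht.le).trans hk)
  have hXk := S.eq_pathGain_smul_add_pathNoise hpath
  rw [hk] at hXk
  refine ⟨_, _, hXk, inner_eq_zero_symm.1 (inner_pathNoise_left_eq_zero hpath_i),
    inner_eq_zero_symm.1 (inner_pathNoise_left_eq_zero hpath_j), ?_⟩
  have hkj : ⟪ρ k, X j⟫_ℂ = 0 := hpath_j 0 (Nat.pos_of_ne_zero hn)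
  have hkk := S.inner_noise_self T hρ k
  rwa [hXk, inner_add_right, inner_smul_right, hkj, mul_zero, zero_add] at hkk

lemma inner_ne_zero (hρ0 : ∀ m, ρ m ≠ 0) (hh : ∀ m, m ≠ r → h m ≠ 0) (i j : V) :
    ⟪X i, X j⟫_ℂ ≠ 0 := by
  obtain ⟨t₀, s₀, hmeet, hi, hj⟩ := T.exists_meet i j
  have hi_r : ∀ t < t₀, par^[t] i ≠ r := fun t ht e ↦ by
    obtain ⟨N, hN⟩ := T.exists_iterate_eq_root j
    exact hi t ht N (e.trans hN.symm)
  have hj_r : ∀ s < s₀, par^[s] j ≠ r := fun s hs e ↦ by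
    obtain ⟨N, hN⟩ := T.exists_iterate_eq_root i
    exact hj s hs N (hN.trans e.symm)
  have hXi := S.eq_pathGain_smul_add_pathNoise hi_r
  rw [hmeet] at hXi
  rw [hXi, S.eq_pathGain_smul_add_pathNoise hj_r, inner_smul_add_smul_add]
  · refine mul_ne_zero (mul_ne_zero ?_ (pathGain_ne_zero fun s hs ↦ hh _ (hj_r s hs)))
      (inner_self_ne_zero.2 (S.ne_zero T hρ (hρ0 _)))
    exact (map_ne_zero _).2 (pathGain_ne_zero fun t ht ↦ hh _ (hi_r t ht))
  · exact inner_pathNoise_left_eq_zero fun t ht ↦ S.inner_noise_eq_zero T hρ fun u e ↦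
      hi t ht (u + s₀) (by rw [Function.iterate_add_apply, e])
  · refine inner_eq_zero_symm.1 (inner_pathNoise_left_eq_zero fun s hs ↦
      S.inner_noise_eq_zero T hρ fun u e ↦ hj s hs (u + t₀) ?_)
    rw [Function.iterate_add_apply, hmeet, e]
  · exact inner_pathNoise_left_eq_zero fun t ht ↦ inner_eq_zero_symm.1
      (inner_pathNoise_left_eq_zero fun s hs ↦ hρ fun e ↦ hi t ht s e.symm)

end IsTreeSignal

end TreeSignal

theorem lcmt_cousins_lemma_general
    {H : Type*} [NormedAddCommGroup H] [InnerProductSpace ℂ H]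
    {V : Type*}
    (r : V) (par : V → V)
    (hroot : par r = r)
    (hreach : ∀ j, ∃ n, par^[n] j = r)
    (h : V → ℝ → ℂ) (ρ : V → ℝ → H)
    (horth : ∀ (ω : ℝ) (a b : V), a ≠ b → ⟪ρ a ω, ρ b ω⟫_ℂ = 0)
    (hwp : ∀ (j : V) (ω : ℝ), ρ j ω ≠ 0)
    (X : V → ℝ → H)
    (hXr : ∀ ω, X r ω = ρ r ω)
    (hX : ∀ j, j ≠ r → ∀ ω, X j ω = h j ω • X (par j) ω + ρ j ω)
    (i j k : V)
    (hkj : ∃ n, 1 ≤ n ∧ par^[n] k = j)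
    (hij : ¬ ∃ n, 1 ≤ n ∧ par^[n] i = j)
    (hne : i ≠ j) :
    (∀ ω : ℝ, coherence (X i ω) (X k ω) ≤ coherence (X i ω) (X j ω)) ∧
    ((∀ (m : V) (ω : ℝ), m ≠ r → h m ω ≠ 0) →
      (∀ ω : ℝ, coherence (X i ω) (X k ω) < coherence (X i ω) (X j ω)) ∧
      ((Measurable fun ω => coherence (X i ω) (X j ω)) →
       (Measurable fun ω => coherence (X i ω) (X k ω)) →
        cohDist (X i) (X j) < cohDist (X i) (X k))) := by
  have T : IsRootedTree r par := ⟨hroot, hreach⟩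
  have S ω : IsTreeSignal r par (h · ω) (ρ · ω) (X · ω) := ⟨hXr ω, fun j hj ↦ hX j hj ω⟩
  have hρ ω : Pairwise fun a b ↦ ⟪ρ a ω, ρ b ω⟫_ℂ = 0 := fun a b ↦ horth ω a b
  have hji : ∀ t, par^[t] i ≠ j := by
    rintro (_ | t) e
    exacts [hne e, hij ⟨t + 1, by omega, e⟩]
  obtain ⟨n, hn, hk⟩ := hkj
  have hsplit ω := (S ω).exists_eq_smul_add_orthogonal T (hρ ω) (by omega) hk hji
  refine ⟨fun ω ↦ ?_, fun hh ↦ ?_⟩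
  · obtain ⟨c, w, hXk, hiw, hjw, -⟩ := hsplit ω
    rw [hXk]
    exact coherence_smul_add_le hiw hjw c
  have hlt ω : coherence (X i ω) (X k ω) < coherence (X i ω) (X j ω) := by
    obtain ⟨c, w, hXk, hiw, hjw, hkw⟩ := hsplit ω
    have hw : w ≠ 0 := by
      rintro rfl
      exact hwp k ω (inner_self_eq_zero.1 (by rw [← hkw, inner_zero_right]))
    rw [hXk]
    exact coherence_smul_add_lt hiw hjw
      ((S ω).inner_ne_zero T (hρ ω) (hwp · ω) (fun m hm ↦ hh m ω hm) i j) hw c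
  exact ⟨hlt, fun hmj hmk ↦ cohDist_lt_cohDist hmj hmk hlt⟩

/-- Lemma 2 of the paper, the 'cousins' lemma: if `k` is a
descendant of `j` and `i` is neither `j` nor a descendant of `j`, then the
coherence of `X i` with `X k` never exceeds that with `X j`; under the
nondegeneracy assumption that no transfer function vanishes, the inequality is
strict at every frequency, and consequently (given measurability of the
coherence functions) `d(i, j) < d(i, k)`. -/
theorem lcmt_cousins_lemma
    {H : Type*} [NormedAddCommGroup H] [InnerProductSpace ℂ H]
    {V : Type*} [Fintype V]
    (r : V) (par : V → V)
    (hroot : par r = r)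
    (hpar : ∀ j, j ≠ r → par j ≠ j)
    (hreach : ∀ j, ∃ n, par^[n] j = r)
    (h : V → ℝ → ℂ) (ρ : V → ℝ → H)
    (horth : ∀ (ω : ℝ) (a b : V), a ≠ b → ⟪ρ a ω, ρ b ω⟫_ℂ = 0)
    (hwp : ∀ (j : V) (ω : ℝ), ρ j ω ≠ 0)
    (X : V → ℝ → H)
    (hXr : ∀ ω, X r ω = ρ r ω)
    (hX : ∀ j, j ≠ r → ∀ ω, X j ω = h j ω • X (par j) ω + ρ j ω)
    (i j k : V)
    (hkj : ∃ n, 1 ≤ n ∧ par^[n] k = j)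
    (hij : ¬ ∃ n, 1 ≤ n ∧ par^[n] i = j)
    (hne : i ≠ j) :
    (∀ ω : ℝ, coherence (X i ω) (X k ω) ≤ coherence (X i ω) (X j ω)) ∧
    ((∀ (m : V) (ω : ℝ), m ≠ r → h m ω ≠ 0) →
      (∀ ω : ℝ, coherence (X i ω) (X k ω) < coherence (X i ω) (X j ω)) ∧
      ((Measurable fun ω => coherence (X i ω) (X j ω)) →
       (Measurable fun ω => coherence (X i ω) (X k ω)) →
        cohDist (X i) (X j) < cohDist (X i) (X k))) :=
  lcmt_cousins_lemma_general r par hroot hreach h ρ horth hwp X hXr hX i j k hkj hij hne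
end

section
/- Let H be a complex inner product space and let x ∈ H be nonzero. Let v, w ∈ ℂ and s, u ∈ H satisfy ⟨x, s⟩ = 0, and set y = v • x + s; assume y ≠ 0. Suppose ⟨x, u⟩ = 0 and ⟨y, u⟩ = 0, and set z = w • y + u; assume z ≠ 0. Then C(x, z) ≤ C(y, z). Moreover, if w ≠ 0 and s ≠ 0, then C(x, z) < C(y, z). -/
open scoped InnerProductSpace

/-!
Since `u` is orthogonal to both `x` and `y`, the inner products of `x` and `y` with `z = w • y + u`
are those with `w • y`, which makes coherence multiplicative along the chain:
`C(x, z) = C(x, y) · C(y, z)`. Cauchy–Schwarz gives `C(x, y) ≤ 1`, strictly unless `y` is a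
multiple of `x`, which the nonzero orthogonal component `s` rules out.
-/

section

variable {H : Type*} [NormedAddCommGroup H] [InnerProductSpace ℂ H]

lemma inner_smul_add_of_inner_eq_zero {a y u : H} (hau : ⟪a, u⟫_ℂ = 0) (w : ℂ) :
    ⟪a, w • y + u⟫_ℂ = w * ⟪a, y⟫_ℂ := by
  rw [inner_add_right, inner_smul_right, hau, add_zero]

lemma norm_inner_self_eq_norm_sq (a : H) : ‖⟪a, a⟫_ℂ‖ = ‖a‖ ^ 2 := by
  rw [← inner_self_re_eq_norm, ← norm_sq_eq_re_inner]

lemma smul_add_ne_smul_of_inner_eq_zero {x s : H} (hxs : ⟪x, s⟫_ℂ = 0) (hs : s ≠ 0) (v r : ℂ) :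
    v • x + s ≠ r • x := by
  intro h
  have hs' : s = (r - v) • x := by rw [sub_smul, ← h]; abel
  have hss : ⟪s, s⟫_ℂ = 0 :=
    calc ⟪s, s⟫_ℂ = (r - v) * ⟪s, x⟫_ℂ := by rw [← inner_smul_right, ← hs']
      _ = 0 := by rw [inner_eq_zero_symm.1 hxs, mul_zero]
  exact hs (inner_self_eq_zero.1 hss)

lemma coherence_nonneg_s8 (a b : H) : 0 ≤ coherence a b := by
  unfold coherence; positivity

lemma coherence_le_one_s8 (a b : H) : coherence a b ≤ 1 := by
  unfold coherence
  refine div_le_one_of_le₀ ?_ (by positivity)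
  rw [← mul_pow]
  exact pow_le_pow_left₀ (norm_nonneg _) (norm_inner_le_norm a b) 2

lemma coherence_pos {a b : H} (h : ⟪a, b⟫_ℂ ≠ 0) : 0 < coherence a b := by
  have ha : a ≠ 0 := by rintro rfl; simp at h
  have hb : b ≠ 0 := by rintro rfl; simp at h
  have := norm_pos_iff.2 ha
  have := norm_pos_iff.2 hb
  have := norm_pos_iff.2 h
  unfold coherence
  positivity

lemma coherence_lt_one {a b : H} (ha : a ≠ 0) (hb : b ≠ 0) (h : ∀ r : ℂ, b ≠ r • a) :
    coherence a b < 1 := by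
  have hlt : ‖⟪a, b⟫_ℂ‖ < ‖a‖ * ‖b‖ :=
    (norm_inner_le_norm a b).lt_of_ne fun heq ↦ by
      obtain ⟨r, -, hr⟩ := (norm_inner_eq_norm_iff ha hb).1 heq
      exact h r hr
  unfold coherence
  rw [← mul_pow]
  refine (div_lt_one (by positivity)).2 ?_
  exact pow_lt_pow_left₀ hlt (norm_nonneg _) two_ne_zero

lemma coherence_smul_add_eq_mul {x y u : H} (hy : y ≠ 0) (hxu : ⟪x, u⟫_ℂ = 0)
    (hyu : ⟪y, u⟫_ℂ = 0) (w : ℂ) :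
    coherence x (w • y + u) = coherence x y * coherence y (w • y + u) := by
  have hy' : ‖y‖ ≠ 0 := norm_ne_zero_iff.2 hy
  unfold coherence
  rw [inner_smul_add_of_inner_eq_zero hxu, inner_smul_add_of_inner_eq_zero hyu,
    norm_mul, norm_mul, norm_inner_self_eq_norm_sq]
  field_simp

end

theorem coherence_child_ge_remote_general
    {H : Type*} [NormedAddCommGroup H] [InnerProductSpace ℂ H]
    (x : H) (hx : x ≠ 0)
    (v w : ℂ) (s u : H)
    (hxs : ⟪x, s⟫_ℂ = 0)
    (y : H) (hy : y = v • x + s) (hy0 : y ≠ 0)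
    (hxu : ⟪x, u⟫_ℂ = 0) (hyu : ⟪y, u⟫_ℂ = 0)
    (z : H) (hz : z = w • y + u) :
    coherence x z ≤ coherence y z ∧
    (w ≠ 0 → s ≠ 0 → coherence x z < coherence y z) := by
  have hchain : coherence x z = coherence x y * coherence y z :=
    hz ▸ coherence_smul_add_eq_mul hy0 hxu hyu w
  refine ⟨?_, fun hw hs ↦ ?_⟩
  · rw [hchain]
    exact mul_le_of_le_one_left (coherence_nonneg_s8 y z) (coherence_le_one_s8 x y)
  · have hxy : coherence x y < 1 :=
      coherence_lt_one hx hy0 fun r ↦ hy ▸ smul_add_ne_smul_of_inner_eq_zero hxs hs v r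
    have hyz : 0 < coherence y z := by
      refine coherence_pos ?_
      rw [hz, inner_smul_add_of_inner_eq_zero hyu]
      exact mul_ne_zero hw (inner_self_ne_zero.2 hy0)
    rw [hchain]
    exact mul_lt_of_lt_one_left hyz hxy

/-- single-frequency core, case A, of the paper's Lemma 3: if
`y = v • x + s` with `s ⟂ x`, and `z = w • y + u` with `u` orthogonal to both
`x` and `y`, then the coherence of `z` with its 'parent' `y` is at least its
coherence with the more remote signal `x`; strict if `w ≠ 0` and `s ≠ 0`. -/
theorem coherence_child_ge_remote
    {H : Type*} [NormedAddCommGroup H] [InnerProductSpace ℂ H]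
    (x : H) (hx : x ≠ 0)
    (v w : ℂ) (s u : H)
    (hxs : ⟪x, s⟫_ℂ = 0)
    (y : H) (hy : y = v • x + s) (hy0 : y ≠ 0)
    (hxu : ⟪x, u⟫_ℂ = 0) (hyu : ⟪y, u⟫_ℂ = 0)
    (z : H) (hz : z = w • y + u) (hz0 : z ≠ 0) :
    coherence x z ≤ coherence y z ∧
    (w ≠ 0 → s ≠ 0 → coherence x z < coherence y z) :=
  coherence_child_ge_remote_general x hx v w s u hxs y hy hy0 hxu hyu z hz
end
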